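/- (Proposition 1) Let d ≥ 2, let {e_n}_{n=1}^{N} be a family of N mutually unbiased orthonormal bases of ℂ^d with projections Π_{nk}, and let ρ = Σ_{n=1}^{N} Σ_{k=1}^{d} λ_{nk} Π_{nk} be a matrix with real coefficients λ_{nk} satisfying tr(ρ) = 1 (equivalently Σ_{n,k} λ_{nk} = 1). Then the probabilities p_{nk} = tr(Π_{nk} ρ) satisfy Σ_{n=1}^{N} Σ_{k=1}^{d} p_{nk}² = tr(ρ²) + (N−1)/d. -/

import Mathlib

open scoped BigOperators

/-- Rank-one orthogonal projection `|v⟩⟨v|` onto a vector `v ∈ ℂ^d`, as a matrix. -/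
noncomputable def proj {d : ℕ} (v : EuclideanSpace ℂ (Fin d)) : Matrix (Fin d) (Fin d) ℂ :=
  Matrix.of fun i j => v i * star (v j)

/-- A family of orthonormal bases of `ℂ^d` is mutually unbiased if
`|⟨e n k, e m l⟩|² = 1/d` for all `n ≠ m` and all `k, l`. -/
def MutuallyUnbiased {d N : ℕ} (e : Fin N → Fin d → EuclideanSpace ℂ (Fin d)) : Prop :=
  ∀ n m : Fin N, n ≠ m → ∀ k l : Fin d,
    ‖(inner ℂ (e n k) (e m l) : ℂ)‖ ^ 2 = 1 / d

/-! Within one basis the overlaps `|⟨e n k, e n l⟩|²` are `δ_{kl}`, across bases they are `1/d`,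
so `p_{nk} = λ_{nk} + c_n` with `c_n = (1 - ∑_l λ_{nl}) / d` depending on `n` only. Hence
`∑ p_{nk}² = ∑ λ_{nk} p_{nk} + ∑_n c_n ∑_k p_{nk}`. The first sum is `tr ρ²`; each basis resolves
the identity, so `∑_k p_{nk} = tr ρ = 1`, and what is left is `∑_n c_n = (N - 1) / d`. -/

open scoped Matrix

lemma trace_proj {d : ℕ} (v : EuclideanSpace ℂ (Fin d)) : (proj v).trace = (‖v‖ : ℂ) ^ 2 := by
  simp only [Matrix.trace, Matrix.diag, proj, Matrix.of_apply, RCLike.star_def, Complex.mul_conj']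
  rw [← Complex.ofReal_pow, EuclideanSpace.norm_sq_eq]
  push_cast; rfl

lemma re_trace_proj_mul_proj {d : ℕ} (v w : EuclideanSpace ℂ (Fin d)) :
    ((proj v * proj w).trace).re = ‖(inner ℂ v w : ℂ)‖ ^ 2 := by
  have h : (proj v * proj w).trace = starRingEnd ℂ (inner ℂ v w) * inner ℂ v w := by
    simp only [Matrix.trace, Matrix.diag, Matrix.mul_apply, proj, Matrix.of_apply,
      PiLp.inner_apply, RCLike.inner_apply, map_sum, map_mul, Complex.conj_conj, RCLike.star_def,
      Finset.sum_mul_sum]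
    refine Finset.sum_congr rfl fun i _ => Finset.sum_congr rfl fun j _ => ?_
    ring
  rw [h, Complex.conj_mul']
  norm_cast

lemma sum_proj_eq_one {d : ℕ} {e : Fin d → EuclideanSpace ℂ (Fin d)} (he : Orthonormal ℂ e) :
    ∑ k, proj (e k) = 1 := by
  set U : Matrix (Fin d) (Fin d) ℂ := Matrix.of fun i k => e k i
  have hU : Uᴴ * U = 1 := by
    ext k l
    simpa [U, Matrix.mul_apply, Matrix.one_apply, PiLp.inner_apply, mul_comm]
      using orthonormal_iff_ite.mp he k l
  -- a one-sided inverse of a square matrix is two-sided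
  have hU' : U * Uᴴ = 1 := mul_eq_one_comm.mp hU
  ext i j
  simpa [U, proj, Matrix.mul_apply, Matrix.sum_apply] using congr($hU' i j)

lemma sum_re_trace_proj_mul {d : ℕ} {e : Fin d → EuclideanSpace ℂ (Fin d)} (he : Orthonormal ℂ e)
    (A : Matrix (Fin d) (Fin d) ℂ) : ∑ k, ((proj (e k) * A).trace).re = A.trace.re := by
  rw [← Complex.re_sum, ← Matrix.trace_sum, ← Matrix.sum_mul, sum_proj_eq_one he, one_mul]

noncomputable def mixture {d N : ℕ} (e : Fin N → Fin d → EuclideanSpace ℂ (Fin d))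
    (lam : Fin N → Fin d → ℝ) : Matrix (Fin d) (Fin d) ℂ :=
  ∑ n, ∑ k, (lam n k : ℂ) • proj (e n k)

section Mixture

variable {d N : ℕ} {e : Fin N → Fin d → EuclideanSpace ℂ (Fin d)} {lam : Fin N → Fin d → ℝ}

lemma re_trace_mul_mixture (A : Matrix (Fin d) (Fin d) ℂ) :
    ((A * mixture e lam).trace).re = ∑ n, ∑ k, lam n k * ((A * proj (e n k)).trace).re := by
  simp [mixture, Matrix.mul_sum, Matrix.trace_sum, Complex.re_sum]

lemma re_trace_mixture_mul_self :
    ((mixture e lam * mixture e lam).trace).re =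
      ∑ n, ∑ k, lam n k * ((proj (e n k) * mixture e lam).trace).re := by
  rw [re_trace_mul_mixture]
  simp_rw [Matrix.trace_mul_comm (mixture e lam)]

lemma trace_mixture (horth : ∀ n, Orthonormal ℂ (e n)) :
    (mixture e lam).trace = ∑ n, ∑ k, (lam n k : ℂ) := by
  simp [mixture, Matrix.trace_sum, trace_proj, (horth _).1 _]

lemma re_trace_proj_mul_mixture (horth : ∀ n, Orthonormal ℂ (e n)) (hmub : MutuallyUnbiased e)
    (hlam : ∑ n, ∑ k, lam n k = 1) (n : Fin N) (k : Fin d) :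
    ((proj (e n k) * mixture e lam).trace).re = lam n k + (1 - ∑ l, lam n l) / d := by
  have h_same : ∑ l, lam n l * ((proj (e n k) * proj (e n l)).trace).re = lam n k := by
    simp [re_trace_proj_mul_proj, orthonormal_iff_ite.mp (horth n), apply_ite (‖·‖ ^ 2)]
  have h_other : ∀ m ∈ Finset.univ.erase n,
      ∑ l, lam m l * ((proj (e n k) * proj (e m l)).trace).re = (∑ l, lam m l) / d := by
    intro m hm
    simp [re_trace_proj_mul_proj, hmub n m (Finset.ne_of_mem_erase hm).symm,
      div_eq_mul_inv, Finset.sum_mul]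
  rw [re_trace_mul_mixture, ← Finset.add_sum_erase _ _ (Finset.mem_univ n), h_same,
    Finset.sum_congr rfl h_other, ← Finset.sum_div, Finset.sum_erase_eq_sub (Finset.mem_univ n),
    hlam]

end Mixture

theorem stmt_5_general (d N : ℕ)
    (e : Fin N → Fin d → EuclideanSpace ℂ (Fin d))
    (horth : ∀ n, Orthonormal ℂ (e n))
    (hmub : MutuallyUnbiased e)
    (lam : Fin N → Fin d → ℝ)
    (hlam : ∑ n : Fin N, ∑ k : Fin d, lam n k = 1)
    (ρ : Matrix (Fin d) (Fin d) ℂ)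
    (hρ : ρ = ∑ n : Fin N, ∑ k : Fin d, (lam n k : ℂ) • proj (e n k))
    (p : Fin N → Fin d → ℝ)
    (hp : ∀ n k, p n k = ((proj (e n k) * ρ).trace).re) :
    ∑ n : Fin N, ∑ k : Fin d, (p n k) ^ 2 = ((ρ * ρ).trace).re + ((N : ℝ) - 1) / d := by
  change ρ = mixture e lam at hρ
  subst hρ
  set c : Fin N → ℝ := fun n => (1 - ∑ l, lam n l) / d
  have hp_eq : ∀ n k, p n k = lam n k + c n := fun n k =>
    (hp n k).trans (re_trace_proj_mul_mixture horth hmub hlam n k)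
  have hp_sum : ∀ n, ∑ k, p n k = 1 := fun n => by
    simp_rw [hp, sum_re_trace_proj_mul (horth n), trace_mixture horth]
    exact_mod_cast hlam
  calc ∑ n, ∑ k, p n k ^ 2 = ∑ n, ∑ k, (lam n k + c n) * p n k := by
        simp_rw [sq, ← hp_eq]
    _ = ∑ n, ∑ k, lam n k * p n k + ∑ n, c n * ∑ k, p n k := by
        simp_rw [add_mul, Finset.sum_add_distrib, Finset.mul_sum]
    _ = ((mixture e lam * mixture e lam).trace).re + ((N : ℝ) - 1) / d := by
        simp_rw [hp_sum, mul_one, re_trace_mixture_mul_self, ← hp, c, ← Finset.sum_div,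
          Finset.sum_sub_distrib, hlam, Finset.sum_const, Finset.card_univ, Fintype.card_fin,
          nsmul_eq_mul, mul_one]

/-- Proposition 1: for `ρ = ∑ λ_{nk} Π_{nk}` with `tr ρ = 1` (i.e. `∑ λ_{nk} = 1`),
the sum of the purities of the `N` observables equals `tr(ρ²) + (N-1)/d`. -/
theorem stmt_5 (d N : ℕ) (hd : 2 ≤ d)
    (e : Fin N → Fin d → EuclideanSpace ℂ (Fin d))
    (horth : ∀ n, Orthonormal ℂ (e n))
    (hmub : MutuallyUnbiased e)
    (lam : Fin N → Fin d → ℝ)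
    (hlam : ∑ n : Fin N, ∑ k : Fin d, lam n k = 1)
    (ρ : Matrix (Fin d) (Fin d) ℂ)
    (hρ : ρ = ∑ n : Fin N, ∑ k : Fin d, (lam n k : ℂ) • proj (e n k))
    (p : Fin N → Fin d → ℝ)
    (hp : ∀ n k, p n k = ((proj (e n k) * ρ).trace).re) :
    ∑ n : Fin N, ∑ k : Fin d, (p n k) ^ 2 = ((ρ * ρ).trace).re + ((N : ℝ) - 1) / d :=
  stmt_5_general d N e horth hmub lam hlam ρ hρ p hp
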